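/- arXiv:1907.01454 — 3 statements merged into one kernel-verified Lean document; each statement's English description precedes it below -/
import Mathlib

section
/- Let X and Y be Δ-generated topological spaces and let f : X → Y be a quotient map. Then Y is Δ-Hausdorff if and only if the set {(x₁,x₂) ∈ X × X : f(x₁) = f(x₂)} is a closed subset of the Δ-kelleyfication of the product space X × X. -/
open Topology

/-- A topological space `X` is *Δ-Hausdorff* if the image of every continuous map
`[0,1] → X` is closed in `X`. -/
def DeltaHausdorff (X : Type*) [TopologicalSpace X] : Prop :=
  ∀ f : C(unitInterval, X), IsClosed (Set.range f)

/-!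
Closedness in the Δ-kelleyfication of `X × X` is tested on maps `ℝⁿ → X × X`, so the forward
direction asks that two maps `ℝⁿ → Y` agree on a closed set. A point in the closure of the
agreement set is the limit of a sequence in it with summable steps; such a sequence lies on a
curve `ℝ → ℝⁿ`, which reduces everything to dimension one. There, if `γ (sⱼ) → z` with
`sⱼ → s₀`, then `z` lies in each of the closed sets `γ '' Icc (s₀ - ε) (s₀ + ε)`, and points are
closed, so `z = γ s₀`.

Conversely, for a path `g : I → Y` the set `f ⁻¹' range g` is tested on maps `p : ℝᵏ → X`: its
preimage is the projection, along the compact factor `I`, of `{(s, t) | g s = f (p t)}`. The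
relation `f x₁ = f x₂` pulls back along `id × p` to a closed subset of `X × ℝᵏ`, since that space
is Δ-generated, and this set is saturated for `f × id`, a quotient map because `ℝᵏ` is locally
compact; so `{(y, t) | y = f (p t)}` is closed in `Y × ℝᵏ`, and so is its preimage under `g × id`.
-/

open Set Filter TopologicalSpace

instance deltaGeneratedSpace_euclidean_prod (m k : ℕ) :
    DeltaGeneratedSpace ((Fin m → ℝ) × (Fin k → ℝ)) :=
  ((Homeomorph.piCongrLeft (Y := fun _ ↦ ℝ) finSumFinEquiv).symm.trans
    Homeomorph.sumArrowHomeomorphProdArrow).isQuotientMap.isGeneratedBy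

theorem DeltaGeneratedSpace.continuous_prod_iff {X L Z : Type*} [TopologicalSpace X]
    [TopologicalSpace L] [TopologicalSpace Z] [DeltaGeneratedSpace X] [LocallyCompactSpace L]
    {g : X × L → Z} :
    Continuous g ↔
      ∀ n (φ : C(Fin n → ℝ, X)), Continuous fun p : (Fin n → ℝ) × L ↦ g (φ p.1, p.2) := by
  refine ⟨fun hg n φ ↦ hg.comp (φ.continuous.prodMap continuous_id), fun h ↦ ?_⟩
  let G : X → C(L, Z) := fun x ↦
    ⟨fun l ↦ g (x, l), (h 0 (.const _ x)).comp (Continuous.prodMk_right 0)⟩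
  have hG : Continuous G := by
    rw [IsGeneratedBy.continuous_iff (fun n ↦ Fin n → ℝ)]
    exact fun n φ ↦ (ContinuousMap.curry ⟨_, h n φ⟩).continuous
  exact ContinuousMap.continuous_uncurry_of_continuous ⟨G, hG⟩

instance DeltaGeneratedSpace.prod_euclidean {X : Type*} [TopologicalSpace X]
    [DeltaGeneratedSpace X] (k : ℕ) : DeltaGeneratedSpace (X × (Fin k → ℝ)) :=
  ⟨DeltaGeneratedSpace.continuous_prod_iff.2 fun _ φ ↦
    (IsGeneratedBy.equiv_symm_comp_continuous_iff _ _).2 (φ.continuous.prodMap continuous_id)⟩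

theorem isClosed_deltaGenerated_iff {Z : Type*} [TopologicalSpace Z] {s : Set Z} :
    IsClosed[deltaGenerated Z] s ↔ ∀ n (p : C(Fin n → ℝ, Z)), IsClosed (p ⁻¹' s) := by
  simp only [isClosed_iSup_iff, isClosed_coinduced, Sigma.forall]

theorem IsClosed.preimage_of_deltaGenerated {Z W : Type*} [TopologicalSpace Z] [TopologicalSpace W]
    [DeltaGeneratedSpace W] {s : Set Z} (hs : IsClosed[deltaGenerated Z] s) {q : W → Z}
    (hq : Continuous q) : IsClosed (q ⁻¹' s) :=
  (IsGeneratedBy.isClosed_iff (fun n ↦ Fin n → ℝ)).2 fun _ φ ↦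
    isClosed_deltaGenerated_iff.1 hs _ (ContinuousMap.comp ⟨q, hq⟩ φ)

theorem Topology.IsQuotientMap.prodMap_id {X Y L : Type*} [TopologicalSpace X]
    [TopologicalSpace Y] [TopologicalSpace L] [LocallyCompactSpace L] {f : X → Y}
    (hf : IsQuotientMap f) : IsQuotientMap (Prod.map f (id : L → L)) :=
  ⟨.of_isOpen_preimage_iff_isOpen fun _ ↦
    ⟨fun hs ↦ isOpen_iff_continuous_mem.2
      (hf.continuous_lift_prod_left (isOpen_iff_continuous_mem.1 hs)),
    fun hs ↦ hs.preimage (hf.continuous.prodMap continuous_id)⟩,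
  hf.surjective.prodMap Function.surjective_id⟩

/-- Rises linearly from `0` at `1 - 2⁻ʲ` to `1` at `1 - 2⁻⁽ʲ⁺¹⁾`. -/
def dyadicRamp (j : ℕ) (s : ℝ) : ℝ := max 0 (min 1 (2 ^ (j + 1) * (s - 1) + 2))

theorem continuous_dyadicRamp (j : ℕ) : Continuous (dyadicRamp j) := by
  unfold dyadicRamp; fun_prop

theorem dyadicRamp_mem_Icc (j : ℕ) (s : ℝ) : dyadicRamp j s ∈ Icc 0 1 :=
  ⟨le_max_left _ _, max_le zero_le_one (min_le_left _ _)⟩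

theorem dyadicRamp_one (j : ℕ) : dyadicRamp j 1 = 1 := by
  simp [dyadicRamp]

theorem dyadicRamp_one_sub_inv_two_pow (j i : ℕ) :
    dyadicRamp j (1 - (2 ^ i)⁻¹) = if j < i then 1 else 0 := by
  have h2i : (0 : ℝ) < 2 ^ i := by positivity
  have harg : 2 ^ (j + 1) * ((1 - (2 ^ i)⁻¹) - 1) + 2 = 2 - 2 ^ (j + 1) / (2 : ℝ) ^ i := by
    field_simp; ring
  rw [dyadicRamp, harg]
  split_ifs with hji
  · have : (2 : ℝ) ^ (j + 1) ≤ 2 ^ i := pow_le_pow_right₀ one_le_two hji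
    rw [min_eq_left (by linarith [(div_le_one h2i).2 this]),
      max_eq_right zero_le_one]
  · have : (2 : ℝ) * 2 ^ i ≤ 2 ^ (j + 1) := by
      rw [← pow_succ']; exact pow_le_pow_right₀ one_le_two (by omega)
    have : 2 ≤ (2 : ℝ) ^ (j + 1) / 2 ^ i := by rwa [le_div_iff₀ h2i]
    rw [min_eq_right (by linarith), max_eq_left (by linarith)]

/-- The curve is `a 0 + ∑ⱼ dyadicRamp j s • (a (j + 1) - a j)`, which walks from `a j` to
`a (j + 1)` while `s` runs through `[1 - 2⁻ʲ, 1 - 2⁻⁽ʲ⁺¹⁾]`. -/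
theorem exists_continuous_curve_through_seq {E : Type*} [NormedAddCommGroup E] [NormedSpace ℝ E]
    [CompleteSpace E] {a : ℕ → E} {t₀ : E} (hsum : Summable fun j ↦ ‖a (j + 1) - a j‖)
    (hlim : Tendsto a atTop (𝓝 t₀)) :
    ∃ σ : ℝ → E, Continuous σ ∧ σ 1 = t₀ ∧ ∀ i, σ (1 - (2 ^ i)⁻¹) = a i := by
  refine ⟨fun s ↦ a 0 + ∑' j, dyadicRamp j s • (a (j + 1) - a j), ?_, ?_, fun i ↦ ?_⟩
  · refine continuous_const.add (continuous_tsum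
      (fun j ↦ (continuous_dyadicRamp j).smul continuous_const) hsum fun j s ↦ ?_)
    rw [norm_smul, Real.norm_eq_abs]
    exact mul_le_of_le_one_left (norm_nonneg _)
      (abs_le.2 ⟨by linarith [(dyadicRamp_mem_Icc j s).1], (dyadicRamp_mem_Icc j s).2⟩)
  · have hsteps : HasSum (fun j ↦ a (j + 1) - a j) (t₀ - a 0) :=
      (hasSum_iff_tendsto_nat_of_summable_norm hsum).2
        (by simpa only [Finset.sum_range_sub] using hlim.sub_const (a 0))
    simp [dyadicRamp_one, hsteps.tsum_eq]
  · dsimp only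
    rw [tsum_eq_sum (s := Finset.range i) fun j hj ↦ by
      simp [dyadicRamp_one_sub_inv_two_pow, Finset.mem_range.not.1 hj]]
    rw [Finset.sum_congr rfl fun j hj ↦ by
      rw [dyadicRamp_one_sub_inv_two_pow, if_pos (Finset.mem_range.1 hj), one_smul],
      Finset.sum_range_sub, add_sub_cancel]

namespace DeltaHausdorff

variable {Y : Type*} [TopologicalSpace Y]

theorem t1Space (hY : DeltaHausdorff Y) : T1Space Y :=
  ⟨fun y ↦ by
    rw [← range_const (ι := unitInterval) (c := y)]
    exact hY (.const _ y)⟩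

theorem isClosed_image_Icc (hY : DeltaHausdorff Y) {γ : ℝ → Y} (hγ : Continuous γ) {a b : ℝ}
    (hab : a < b) : IsClosed (γ '' Icc a b) := by
  have := hY ⟨γ ∘ Subtype.val ∘ (iccHomeoI a b hab).symm, by fun_prop⟩
  rwa [ContinuousMap.coe_mk, range_comp, range_comp, Homeomorph.range_coe,
    image_univ, Subtype.range_coe] at this

theorem eq_of_tendsto (hY : DeltaHausdorff Y) {γ : ℝ → Y} (hγ : Continuous γ) {l : Filter ℝ}
    [l.NeBot] {s₀ : ℝ} (hl : l ≤ 𝓝 s₀) {z : Y} (h : Tendsto γ l (𝓝 z)) : γ s₀ = z := by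
  by_contra hne
  have := hY.t1Space
  obtain ⟨ε, hε, hball⟩ : ∃ ε > 0, Metric.closedBall s₀ ε ⊆ γ ⁻¹' {z}ᶜ :=
    Metric.nhds_basis_closedBall.mem_iff.1 ((isOpen_compl_singleton.preimage hγ).mem_nhds hne)
  have hclosed : IsClosed (γ '' Metric.closedBall s₀ ε) := by
    rw [Real.closedBall_eq_Icc]
    exact hY.isClosed_image_Icc hγ (by linarith)
  obtain ⟨w, hw, rfl⟩ := hclosed.mem_of_tendsto h
    (eventually_of_mem (hl (Metric.closedBall_mem_nhds s₀ hε)) fun s hs ↦ mem_image_of_mem γ hs)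
  exact hball hw rfl

theorem isClosed_setOf_eq (hY : DeltaHausdorff Y) {E : Type*} [NormedAddCommGroup E]
    [NormedSpace ℝ E] [CompleteSpace E] {g₁ g₂ : E → Y} (h₁ : Continuous g₁)
    (h₂ : Continuous g₂) : IsClosed {t | g₁ t = g₂ t} := by
  refine isClosed_of_closure_subset fun t₀ ht₀ ↦ ?_
  choose a ha hdist using fun j : ℕ ↦ Metric.mem_closure_iff.1 ht₀ ((1 / 2) ^ j) (by positivity)
  have hlim : Tendsto a atTop (𝓝 t₀) :=
    tendsto_iff_dist_tendsto_zero.2 <| squeeze_zero (fun _ ↦ dist_nonneg)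
      (fun j ↦ (dist_comm t₀ (a j) ▸ hdist j).le)
      (tendsto_pow_atTop_nhds_zero_of_lt_one (by norm_num) (by norm_num))
  have hsum : Summable fun j ↦ ‖a (j + 1) - a j‖ := by
    refine Summable.of_nonneg_of_le (fun _ ↦ norm_nonneg _) (fun j ↦ ?_)
      (summable_geometric_two.mul_left 2)
    calc ‖a (j + 1) - a j‖ ≤ dist t₀ (a (j + 1)) + dist t₀ (a j) := by
          rw [← dist_eq_norm]; exact dist_triangle_left _ _ _
      _ ≤ 2 * (1 / 2) ^ j := by
          have : ((1 : ℝ) / 2) ^ (j + 1) ≤ (1 / 2) ^ j :=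
            pow_le_pow_of_le_one (by norm_num) (by norm_num) (Nat.le_succ j)
          linarith [hdist j, hdist (j + 1)]
  obtain ⟨σ, hσ, hσ1, hσa⟩ := exists_continuous_curve_through_seq hsum hlim
  have hτ : Tendsto (fun i : ℕ ↦ 1 - ((2 : ℝ) ^ i)⁻¹) atTop (𝓝 1) := by
    simpa using (tendsto_inv_atTop_zero.comp
      (tendsto_pow_atTop_atTop_of_one_lt one_lt_two)).const_sub (1 : ℝ)
  have hcoinc : Tendsto (fun i : ℕ ↦ g₁ (σ (1 - (2 ^ i)⁻¹))) atTop (𝓝 (g₂ t₀)) :=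
    ((h₂.tendsto t₀).comp hlim).congr fun i ↦ by rw [Function.comp_apply, hσa]; exact (ha i).symm
  simpa [hσ1] using hY.eq_of_tendsto (h₁.comp hσ) hτ (tendsto_map'_iff.2 hcoinc)

theorem isClosed_deltaGenerated_setOf_eq (hY : DeltaHausdorff Y) {X : Type*}
    [TopologicalSpace X] {f : X → Y} (hf : Continuous f) :
    IsClosed[deltaGenerated (X × X)] {p : X × X | f p.1 = f p.2} :=
  isClosed_deltaGenerated_iff.2 fun _ p ↦ hY.isClosed_setOf_eq
    (hf.comp (continuous_fst.comp p.continuous)) (hf.comp (continuous_snd.comp p.continuous))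

end DeltaHausdorff

theorem DeltaHausdorff.of_isQuotientMap {X Y : Type*} [TopologicalSpace X] [TopologicalSpace Y]
    [DeltaGeneratedSpace X] {f : X → Y} (hf : IsQuotientMap f)
    (hR : IsClosed[deltaGenerated (X × X)] {p : X × X | f p.1 = f p.2}) : DeltaHausdorff Y := by
  intro g
  rw [← hf.isClosed_preimage, IsGeneratedBy.isClosed_iff (fun n ↦ Fin n → ℝ)]
  intro k p
  have hXk : IsClosed {q : X × (Fin k → ℝ) | f q.1 = f (p q.2)} :=
    hR.preimage_of_deltaGenerated (continuous_fst.prodMk (p.continuous.comp continuous_snd))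
  have hYk : IsClosed {q : Y × (Fin k → ℝ) | q.1 = f (p q.2)} :=
    hf.prodMap_id.isClosed_preimage.1 hXk
  have hIk : IsClosed {q : unitInterval × (Fin k → ℝ) | g q.1 = f (p q.2)} :=
    hYk.preimage (g.continuous.prodMap continuous_id)
  convert isClosedMap_snd_of_compactSpace _ hIk using 1
  ext t
  simp [eq_comm]

theorem deltaHausdorff_quotient_iff_general
    {X Y : Type*} [TopologicalSpace X] [TopologicalSpace Y]
    [DeltaGeneratedSpace X]
    (f : X → Y) (hf : Topology.IsQuotientMap f) :
    DeltaHausdorff Y ↔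
      IsClosed[TopologicalSpace.deltaGenerated (X × X)] {p : X × X | f p.1 = f p.2} :=
  ⟨fun hY ↦ hY.isClosed_deltaGenerated_setOf_eq hf.continuous, .of_isQuotientMap hf⟩

/-- Let `f : X → Y` be a quotient map between Δ-generated spaces.  Then `Y` is
Δ-Hausdorff iff `{(x₁, x₂) | f x₁ = f x₂}` is closed in the Δ-kelleyfication of
the product `X × X`. -/
theorem deltaHausdorff_quotient_iff
    {X Y : Type*} [TopologicalSpace X] [TopologicalSpace Y]
    [DeltaGeneratedSpace X] [DeltaGeneratedSpace Y]
    (f : X → Y) (hf : Topology.IsQuotientMap f) :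
    DeltaHausdorff Y ↔
      IsClosed[TopologicalSpace.deltaGenerated (X × X)] {p : X × X | f p.1 = f p.2} :=
  deltaHausdorff_quotient_iff_general f hf
end

section
/- Let A, B, X be Δ-generated topological spaces, let f : A → B be a closed embedding, and let h : A → X be a continuous map. Form the pushout Y = B ⊔_A X in the category of topological spaces. If B and X are Δ-Hausdorff, then Y is Δ-Hausdorff. -/
open CategoryTheory CategoryTheory.Limits

/-!
A set in the pushout `Y` is closed iff its preimages in `B` and in `X` are, and in a Δ-generated
space closedness can already be tested along maps `ℝ → Z`, because a convergent sequence in `ℝⁿ`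
lies on a piecewise-linear path. For a path `p` in `Y` such a test produces sequences with
`v (r j) = p (s j)`, `r j → r₀` and, after passing to a subsequence, `s j → s₀`. The basic fact
is that in a Δ-Hausdorff space limits along a map `v : ℝ → Z` are unique: if `v (r j) → ξ` then
`ξ` lies in every closed set `v '' [r₀ - ε, r₀ + ε]`, so `ξ = v r₀` as points are closed.

On the `X` side this suffices, since `X` is a closed subspace of `Y`. On the `B` side, either the
points `v (r j)` frequently lie in `f A`, and one passes to `X`; or eventually they avoid `f A`.
Then the image in `Y` of the compact set `v '' ({r₀} ∪ {r j | j ≥ N})` is closed, as it meets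
`f A` in at most one point, and `B \ f A` embeds openly in `Y`.
-/

open Filter Set Topology

section SeqInterp

variable {E : Type*} [NormedAddCommGroup E] [NormedSpace ℝ E]

/-- `Int.toNat` makes the interpolation constant to the left of `0`. -/
noncomputable def seqInterp (t : ℕ → E) (r : ℝ) : E :=
  AffineMap.lineMap (t ⌊r⌋.toNat) (t (⌊r⌋ + 1).toNat) (Int.fract r)

theorem seqInterp_eq_lineMap (t : ℕ → E) {n : ℤ} {r : ℝ} (hr : r ∈ Icc (n : ℝ) (n + 1)) :
    seqInterp t r = AffineMap.lineMap (t n.toNat) (t (n + 1).toNat) (r - n) := by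
  rcases hr.2.lt_or_eq with hlt | rfl
  · have hfloor : ⌊r⌋ = n := Int.floor_eq_iff.2 ⟨hr.1, hlt⟩
    rw [seqInterp, Int.fract, hfloor]
  · have : ⌊(n : ℝ) + 1⌋ = n + 1 := by exact_mod_cast Int.floor_intCast (n + 1)
    simp [seqInterp, this]

theorem seqInterp_natCast (t : ℕ → E) (n : ℕ) : seqInterp t n = t n := by
  simp [seqInterp]

theorem continuous_seqInterp (t : ℕ → E) : Continuous (seqInterp t) := by
  refine LocallyFinite.continuous (f := fun n : ℤ => Icc (n : ℝ) (n + 1))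
    (locallyFinite_Icc_of_tendsto tendsto_intCast_atTop_atTop
      (tendsto_atBot_add_const_right _ _ (tendsto_intCast_atBot_iff.2 tendsto_id)))
    (eq_univ_of_forall fun r =>
      mem_iUnion.2 ⟨⌊r⌋, Int.floor_le r, (Int.lt_floor_add_one r).le⟩)
    (fun _ => isClosed_Icc) fun n => ?_
  refine (Continuous.continuousOn ?_).congr fun r hr => seqInterp_eq_lineMap t hr
  fun_prop

theorem tendsto_seqInterp_atTop {t : ℕ → E} {t₀ : E} (ht : Tendsto t atTop (𝓝 t₀)) :
    Tendsto (seqInterp t) atTop (𝓝 t₀) := by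
  refine Metric.nhds_basis_ball.tendsto_right_iff.2 fun ε hε => ?_
  obtain ⟨N, hN⟩ := eventually_atTop.1 (Metric.tendsto_nhds.1 ht ε hε)
  filter_upwards [eventually_ge_atTop (N : ℝ)] with r hr
  have hfloor : (N : ℤ) ≤ ⌊r⌋ := Int.le_floor.2 hr
  exact (convex_ball t₀ ε).lineMap_mem (hN _ (by omega)) (hN _ (by omega))
    ⟨Int.fract_nonneg r, (Int.fract_lt_one r).le⟩

theorem exists_continuousMap_real_through_seq {t : ℕ → E} {t₀ : E}
    (ht : Tendsto t atTop (𝓝 t₀)) :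
    ∃ γ : C(ℝ, E), γ 0 = t₀ ∧ ∀ n : ℕ, γ (1 / (n + 1)) = t n := by
  set γ : ℝ → E := fun x => if x ≤ 0 then t₀ else seqInterp t (x⁻¹ - 1) with hγ
  have hpos : ∀ x > 0, γ =ᶠ[𝓝 x] fun x => seqInterp t (x⁻¹ - 1) := fun x hx =>
    eventually_of_mem (Ioi_mem_nhds hx) fun y hy => if_neg (not_le.2 hy)
  refine ⟨⟨γ, continuous_iff_continuousAt.2 fun x => ?_⟩, if_pos le_rfl, fun n => ?_⟩
  · rcases lt_trichotomy x 0 with hx | rfl | hx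
    · exact continuousAt_const.congr
        (eventually_of_mem (Iio_mem_nhds hx) fun y hy => (if_pos (le_of_lt hy)).symm)
    · rw [ContinuousAt, ← nhdsLE_sup_nhdsGT, show γ 0 = t₀ from if_pos le_rfl]
      refine Tendsto.sup ?_ ?_
      · exact tendsto_const_nhds.congr' (eventually_nhdsWithin_of_forall fun y hy =>
          (if_pos (mem_Iic.1 hy)).symm)
      · refine ((tendsto_seqInterp_atTop ht).comp
          (tendsto_atTop_add_const_right _ _ tendsto_inv_nhdsGT_zero)).congr'
          (eventually_nhdsWithin_of_forall fun y hy => (if_neg (not_le.2 hy)).symm)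
    · exact ((continuous_seqInterp t).continuousAt.comp
        ((continuousAt_inv₀ hx.ne').sub continuousAt_const)).congr (hpos x hx).symm
  · have : (0 : ℝ) < 1 / (n + 1) := by positivity
    simp only [ContinuousMap.coe_mk, hγ, if_neg (not_le.2 this)]
    rw [one_div, inv_inv, add_sub_cancel_right, seqInterp_natCast]

end SeqInterp

namespace DeltaGeneratedSpace

variable {Z : Type*} [TopologicalSpace Z] [DeltaGeneratedSpace Z]

theorem isClosed_iff_forall_real {C : Set Z} :
    IsClosed C ↔ ∀ v : C(ℝ, Z), IsClosed (v ⁻¹' C) := by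
  refine ⟨fun hC v => hC.preimage v.continuous, fun H => ?_⟩
  refine (IsGeneratedBy.isClosed_iff (fun n ↦ Fin n → ℝ)).2 fun n w => ?_
  refine IsSeqClosed.isClosed fun τ τ₀ hτ hτ₀ => ?_
  obtain ⟨γ, hγ₀, hγ⟩ := exists_continuousMap_real_through_seq hτ₀
  have := (H (w.comp γ)).mem_of_tendsto tendsto_one_div_add_atTop_nhds_zero_nat
    (.of_forall fun n => by rw [mem_preimage, ContinuousMap.comp_apply, hγ]; exact hτ n)
  simpa [hγ₀] using this

theorem isClosed_preimage_range_of_tendsto {K Y : Type*} [TopologicalSpace K] [SeqCompactSpace K]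
    (p : K → Y) (g : Z → Y)
    (H : ∀ (v : C(ℝ, Z)) (s : ℕ → K) (r : ℕ → ℝ) (s₀ : K) (r₀ : ℝ),
      Tendsto s atTop (𝓝 s₀) → Tendsto r atTop (𝓝 r₀) → (∀ j, p (s j) = g (v (r j))) →
        g (v r₀) ∈ range p) :
    IsClosed (g ⁻¹' range p) := by
  refine isClosed_iff_forall_real.2 fun v => IsSeqClosed.isClosed fun r r₀ hr hr₀ => ?_
  choose s hs using hr
  obtain ⟨s₀, φ, hφ, hs₀⟩ := SeqCompactSpace.tendsto_subseq s
  exact H v (s ∘ φ) (r ∘ φ) s₀ r₀ hs₀ (hr₀.comp hφ.tendsto_atTop) fun j => hs (φ j)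

end DeltaGeneratedSpace

namespace DeltaHausdorff

variable {Z : Type*} [TopologicalSpace Z] (hZ : DeltaHausdorff Z)
include hZ

theorem of_continuous_injective {Y : Type*} [TopologicalSpace Y] {g : Y → Z}
    (hg : Continuous g) (hinj : Function.Injective g) : DeltaHausdorff Y := fun γ => by
  rw [← hinj.preimage_image (range γ), ← range_comp]
  exact (hZ ⟨g ∘ γ, hg.comp γ.continuous⟩).preimage hg

theorem t1Space_s14 : T1Space Z :=
  ⟨fun z => range_const (ι := unitInterval) ▸ hZ (.const _ z)⟩

theorem isClosed_image_Icc_s14 (v : C(ℝ, Z)) {a b : ℝ} (hab : a ≤ b) :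
    IsClosed (v '' Icc a b) := by
  have : v '' Icc a b = range (v ∘ AffineMap.lineMap a b ∘ ((↑) : unitInterval → ℝ)) := by
    rw [range_comp, range_comp, Subtype.range_coe, ← segment_eq_image_lineMap,
      segment_eq_Icc hab]
  rw [this]
  exact hZ ⟨_, v.continuous.comp (AffineMap.lineMap_continuous.comp continuous_subtype_val)⟩

theorem eq_of_tendsto_s14 (v : C(ℝ, Z)) {ι : Type*} {l : Filter ι} [l.NeBot] {r : ι → ℝ}
    {r₀ : ℝ} {ξ : Z} (hr : Tendsto r l (𝓝 r₀)) (hξ : Tendsto (v ∘ r) l (𝓝 ξ)) : ξ = v r₀ := by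
  have := hZ.t1Space_s14
  have hball : ∀ ε > 0, ξ ∈ v '' Metric.closedBall r₀ ε := fun ε hε =>
    Real.closedBall_eq_Icc ▸ (hZ.isClosed_image_Icc_s14 v (by linarith)).mem_of_tendsto hξ
      ((hr.eventually (Real.closedBall_eq_Icc ▸ Metric.closedBall_mem_nhds r₀ hε)).mono
        fun j hj => mem_image_of_mem v hj)
  refine (mem_singleton_iff.1 ?_).symm
  rw [← closure_singleton, mem_closure_iff_nhds]
  intro U hU
  obtain ⟨ε, hε, hεU⟩ :=
    Metric.nhds_basis_closedBall.mem_iff.1 (v.continuous.continuousAt hU)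
  exact ⟨ξ, image_subset_iff.2 hεU (hball ε hε), rfl⟩

theorem isClosed_image_of_isCompact [DeltaGeneratedSpace Z] (v : C(ℝ, Z)) {K : Set ℝ}
    (hK : IsCompact K) : IsClosed (v '' K) := by
  have := isCompact_iff_compactSpace.1 hK
  rw [← Subtype.range_coe (s := K), ← range_comp]
  refine DeltaGeneratedSpace.isClosed_preimage_range_of_tendsto (v ∘ ((↑) : K → ℝ)) id
    fun w s r s₀ r₀ hs hr hsr => ⟨s₀, ?_⟩
  refine (hZ.eq_of_tendsto_s14 v (continuous_subtype_val.tendsto s₀ |>.comp hs) ?_).symm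
  exact ((w.continuous.tendsto r₀).comp hr).congr fun j => (hsr j).symm

end DeltaHausdorff

universe u

/-- The pushout of `f` and `h` as a quotient of `B ⊕ X`, by the relation of the pushout in `Type`
so that its description of the generated equivalence relation applies. -/
abbrev AdjunctionSpace {A B X : Type u} [TopologicalSpace A] [TopologicalSpace B]
    [TopologicalSpace X] (f : C(A, B)) (h : C(A, X)) : Type u :=
  Quot (Types.Pushout.Rel (TypeCat.ofHom f) (TypeCat.ofHom h))

namespace AdjunctionSpace

variable {A B X : Type u} [TopologicalSpace A] [TopologicalSpace B] [TopologicalSpace X]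
  (f : C(A, B)) (h : C(A, X))

def inl (b : B) : AdjunctionSpace f h := Quot.mk _ (.inl b)

def inr (x : X) : AdjunctionSpace f h := Quot.mk _ (.inr x)

theorem continuous_inl : Continuous (inl f h) := continuous_quot_mk.comp _root_.continuous_inl

theorem continuous_inr : Continuous (inr f h) := continuous_quot_mk.comp _root_.continuous_inr

theorem condition (a : A) : inl f h (f a) = inr f h (h a) := Quot.sound (.inl_inr a)

variable {f h}

theorem isClosed_iff {S : Set (AdjunctionSpace f h)} :
    IsClosed S ↔ IsClosed (inl f h ⁻¹' S) ∧ IsClosed (inr f h ⁻¹' S) := by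
  rw [← isQuotientMap_quot_mk.isClosed_preimage, isClosed_sum_iff]
  rfl

theorem isOpen_iff {S : Set (AdjunctionSpace f h)} :
    IsOpen S ↔ IsOpen (inl f h ⁻¹' S) ∧ IsOpen (inr f h ⁻¹' S) := by
  rw [← isQuotientMap_quot_mk.isOpen_preimage, isOpen_sum_iff]
  rfl

section Injective

variable (hf : Function.Injective f)
include hf

theorem mk_eq_mk_iff {u v : B ⊕ X} :
    (Quot.mk _ u : AdjunctionSpace f h) = Quot.mk _ v ↔
      Types.Pushout.Rel' (TypeCat.ofHom f) (TypeCat.ofHom h) u v :=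
  have : Mono (TypeCat.ofHom f) := (mono_iff_injective _).2 hf
  Types.Pushout.quot_mk_eq_iff _ _ u v

theorem inl_eq_inr_iff {b : B} {x : X} : inl f h b = inr f h x ↔ ∃ a, b = f a ∧ x = h a :=
  (mk_eq_mk_iff hf).trans (Types.Pushout.inl_rel'_inr_iff _ _ _ _)

theorem inl_eq_inl_iff {b b' : B} :
    inl f h b = inl f h b' ↔ b = b' ∨ ∃ a a', h a = h a' ∧ b = f a ∧ b' = f a' :=
  (mk_eq_mk_iff hf).trans <| (Types.Pushout.inl_rel'_inl_iff _ _ _ _).trans <| by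
    simp only [exists_prop]; rfl

theorem inr_injective : Function.Injective (inr f h) := fun _ _ hxx =>
  (Types.Pushout.inr_rel'_inr_iff _ _ _ _).1 ((mk_eq_mk_iff hf).1 hxx)

theorem preimage_inl_image_inl (T : Set B) :
    inl f h ⁻¹' (inl f h '' T) = T ∪ f '' (h ⁻¹' (h '' (f ⁻¹' T))) := by
  ext b
  simp only [mem_preimage, mem_image, mem_union, inl_eq_inl_iff hf]
  constructor
  · rintro ⟨b', hb', rfl | ⟨a', a, he, rfl, rfl⟩⟩
    · exact .inl hb'
    · exact .inr ⟨a, ⟨a', hb', he⟩, rfl⟩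
  · rintro (hb | ⟨a, ⟨a', hb', he⟩, rfl⟩)
    · exact ⟨b, hb, .inl rfl⟩
    · exact ⟨f a', hb', .inr ⟨a', a, he, rfl, rfl⟩⟩

theorem preimage_inr_image_inl (T : Set B) :
    inr f h ⁻¹' (inl f h '' T) = h '' (f ⁻¹' T) := by
  ext x
  simp only [mem_preimage, mem_image, inl_eq_inr_iff hf]
  constructor
  · rintro ⟨_, hb, a, rfl, rfl⟩
    exact ⟨a, hb, rfl⟩
  · rintro ⟨a, ha, rfl⟩
    exact ⟨f a, ha, a, rfl, rfl⟩

theorem preimage_inl_image_inr (C : Set X) :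
    inl f h ⁻¹' (inr f h '' C) = f '' (h ⁻¹' C) := by
  ext b
  simp only [mem_preimage, mem_image, eq_comm (a := inr f h _), inl_eq_inr_iff hf]
  constructor
  · rintro ⟨_, hx, a, rfl, rfl⟩
    exact ⟨a, hx, rfl⟩
  · rintro ⟨a, ha, rfl⟩
    exact ⟨h a, ha, a, rfl, rfl⟩

end Injective

section IsClosedEmbedding

variable (hf : IsClosedEmbedding f)
include hf

theorem isClosedEmbedding_inr : IsClosedEmbedding (inr f h) := by
  refine .of_continuous_injective_isClosedMap (continuous_inr f h) (inr_injective hf.injective)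
    fun C hC => isClosed_iff.2 ⟨?_, ?_⟩
  · rw [preimage_inl_image_inr hf.injective]
    exact hf.isClosedMap _ (hC.preimage h.continuous)
  · rwa [(inr_injective hf.injective).preimage_image]

theorem isClosed_inl_image {T : Set B} (hT : IsClosed T) (hT' : IsClosed (h '' (f ⁻¹' T))) :
    IsClosed (inl f h '' T) := by
  rw [isClosed_iff, preimage_inl_image_inl hf.injective, preimage_inr_image_inl hf.injective]
  exact ⟨hT.union (hf.isClosedMap _ (hT'.preimage h.continuous)), hT'⟩

theorem tendsto_of_tendsto_inl {ι : Type*} {l : Filter ι} {b : ι → B} {β : B}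
    (hβ : β ∉ range f) (H : Tendsto (inl f h ∘ b) l (𝓝 (inl f h β))) : Tendsto b l (𝓝 β) := by
  refine tendsto_nhds.2 fun V hV hβV => ?_
  set V' := V ∩ (range f)ᶜ
  have hV' : f ⁻¹' V' = ∅ := eq_empty_of_forall_notMem fun a ha => ha.2 ⟨a, rfl⟩
  have hopen : IsOpen (inl f h '' V') := by
    rw [isOpen_iff, preimage_inl_image_inl hf.injective, preimage_inr_image_inl hf.injective,
      hV']
    simpa using hV.inter hf.isClosed_range.isOpen_compl
  filter_upwards [H (hopen.mem_nhds ⟨β, ⟨hβV, hβ⟩, rfl⟩)] with j hj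
  have : b j ∈ inl f h ⁻¹' (inl f h '' V') := hj
  rw [preimage_inl_image_inl hf.injective, hV', image_empty, preimage_empty, image_empty,
    union_empty] at this
  exact this.1

end IsClosedEmbedding

theorem eq_inr_of_tendsto (hf : IsClosedEmbedding f) (hX : DeltaHausdorff X) {w : C(ℝ, X)}
    {ι : Type*} {l : Filter ι} [l.NeBot] {r : ι → ℝ} {r₀ : ℝ} {y : AdjunctionSpace f h}
    (hr : Tendsto r l (𝓝 r₀)) (H : Tendsto (fun j => inr f h (w (r j))) l (𝓝 y)) :
    y = inr f h (w r₀) := by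
  have hinr := isClosedEmbedding_inr (h := h) hf
  obtain ⟨x, rfl⟩ : y ∈ range (inr f h) :=
    hinr.isClosed_range.mem_of_tendsto H (.of_forall fun j => mem_range_self _)
  rw [hX.eq_of_tendsto_s14 w hr (hinr.isEmbedding.tendsto_nhds_iff.2 H)]

theorem eq_inl_of_tendsto [DeltaGeneratedSpace B] (hf : IsClosedEmbedding f)
    (hB : DeltaHausdorff B) (hX : DeltaHausdorff X) {u : C(ℝ, B)} {τ : ℕ → ℝ} {τ₀ : ℝ}
    {y : AdjunctionSpace f h} (hτ : Tendsto τ atTop (𝓝 τ₀))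
    (H : Tendsto (fun j => inl f h (u (τ j))) atTop (𝓝 y))
    (hτf : ∀ᶠ j in atTop, u (τ j) ∉ range f) : y = inl f h (u τ₀) := by
  obtain ⟨N, hN⟩ := eventually_atTop.1 hτf
  set S := insert τ₀ (range fun j => τ (j + N))
  have hS : IsCompact S := (hτ.comp (tendsto_add_atTop_nat N)).isCompact_insert_range
  have hSf : ∀ b ∈ u '' S, b ∈ range f → b = u τ₀ := by
    rintro _ ⟨σ, rfl | ⟨j, rfl⟩, rfl⟩ hσ
    · rfl
    · exact absurd hσ (hN _ (Nat.le_add_left N j))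
  have hfS : (f ⁻¹' (u '' S)).Subsingleton := fun a ha a' ha' =>
    hf.injective ((hSf _ ha ⟨a, rfl⟩).trans (hSf _ ha' ⟨a', rfl⟩).symm)
  have := hX.t1Space_s14
  have hclosed : IsClosed (inl f h '' (u '' S)) :=
    isClosed_inl_image hf (hB.isClosed_image_of_isCompact u hS) (hfS.image h).isClosed
  obtain ⟨β, hβS, rfl⟩ : y ∈ inl f h '' (u '' S) := hclosed.mem_of_tendsto H <|
    eventually_atTop.2 ⟨N, fun j hj => mem_image_of_mem _ <| mem_image_of_mem _ <|
      .inr ⟨j - N, by simp only [Nat.sub_add_cancel hj]⟩⟩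
  by_cases hβf : β ∈ range f
  · rw [hSf β hβS hβf]
  · rw [hB.eq_of_tendsto_s14 u hτ (tendsto_of_tendsto_inl hf hβf H)]

variable {K : Type*} [TopologicalSpace K] [SeqCompactSpace K]

theorem isClosed_preimage_inr_range [DeltaGeneratedSpace X] (hf : IsClosedEmbedding f)
    (hX : DeltaHausdorff X) (p : C(K, AdjunctionSpace f h)) :
    IsClosed (inr f h ⁻¹' range p) :=
  DeltaGeneratedSpace.isClosed_preimage_range_of_tendsto p _ fun _ _ _ s₀ _ hs hr hsr =>
    ⟨s₀, eq_inr_of_tendsto hf hX hr (((p.continuous.tendsto s₀).comp hs).congr hsr)⟩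

theorem isClosed_preimage_inl_range [DeltaGeneratedSpace B] [DeltaGeneratedSpace X]
    (hf : IsClosedEmbedding f) (hB : DeltaHausdorff B) (hX : DeltaHausdorff X)
    (p : C(K, AdjunctionSpace f h)) : IsClosed (inl f h ⁻¹' range p) := by
  refine DeltaGeneratedSpace.isClosed_preimage_range_of_tendsto p _
    fun u s τ s₀ τ₀ hs hτ hsτ => ?_
  have H : Tendsto (fun j => inl f h (u (τ j))) atTop (𝓝 (p s₀)) :=
    ((p.continuous.tendsto s₀).comp hs).congr hsτ
  by_cases hfreq : ∃ᶠ j in atTop, u (τ j) ∈ range f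
  · have hF : IsClosed (f '' (h ⁻¹' (inr f h ⁻¹' range p))) :=
      hf.isClosedMap _ ((isClosed_preimage_inr_range hf hX p).preimage h.continuous)
    obtain ⟨a, ha, hau⟩ := hF.mem_of_frequently_of_tendsto
      (hfreq.mono fun j ⟨a, ha⟩ => ⟨a, ⟨s j, by rw [hsτ, ← ha, condition]⟩, ha⟩)
      ((u.continuous.tendsto τ₀).comp hτ)
    rw [← hau, condition]
    exact ha
  · exact ⟨s₀, eq_inl_of_tendsto hf hB hX hτ H (not_frequently.1 hfreq)⟩

theorem deltaHausdorff [DeltaGeneratedSpace B] [DeltaGeneratedSpace X]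
    (hf : IsClosedEmbedding f) (hB : DeltaHausdorff B) (hX : DeltaHausdorff X) :
    DeltaHausdorff (AdjunctionSpace f h) := fun p =>
  isClosed_iff.2 ⟨isClosed_preimage_inl_range hf hB hX p, isClosed_preimage_inr_range hf hX p⟩

section TopCat

variable {A B X : TopCat.{u}} (f : A ⟶ B) (h : A ⟶ X)

def pushoutCocone : PushoutCocone f h :=
  PushoutCocone.mk (W := TopCat.of (AdjunctionSpace f.hom h.hom))
    (TopCat.ofHom ⟨inl f.hom h.hom, continuous_inl _ _⟩)
    (TopCat.ofHom ⟨inr f.hom h.hom, continuous_inr _ _⟩) (by ext a; exact condition _ _ a)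

def isColimitPushoutCocone : IsColimit (pushoutCocone f h) :=
  PushoutCocone.IsColimit.mk _
    (fun s => TopCat.ofHom ⟨Quot.lift (Sum.elim s.inl s.inr) (by
      rintro _ _ ⟨a⟩
      exact ConcreteCategory.congr_hom s.condition a),
      continuous_quot_lift _ (s.inl.hom.continuous.sumElim s.inr.hom.continuous)⟩)
    (fun _ => rfl) (fun _ => rfl) fun s m h₁ h₂ => by
      ext ⟨b | x⟩
      exacts [ConcreteCategory.congr_hom h₁ b, ConcreteCategory.congr_hom h₂ x]

end TopCat

end AdjunctionSpace

theorem deltaHausdorff_pushout_general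
    {A B X : TopCat.{0}}
    [DeltaGeneratedSpace B] [DeltaGeneratedSpace X]
    (f : A ⟶ B) (hf : Topology.IsClosedEmbedding f) (h : A ⟶ X)
    (hB : DeltaHausdorff B) (hX : DeltaHausdorff X) :
    DeltaHausdorff ((pushout f h : TopCat.{0}) : Type) := by
  let e := colimit.isoColimitCocone ⟨_, AdjunctionSpace.isColimitPushoutCocone f h⟩
  exact (AdjunctionSpace.deltaHausdorff hf hB hX).of_continuous_injective
    e.hom.hom.continuous (TopCat.homeoOfIso e).injective

/-- If `f : A → B` is a closed embedding of Δ-generated spaces, `h : A → X` is a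
continuous map with `X` Δ-generated, and `B` and `X` are Δ-Hausdorff, then the pushout
`B ⊔_A X` (computed in the category of topological spaces) is Δ-Hausdorff. -/
theorem deltaHausdorff_pushout
    {A B X : TopCat.{0}}
    [DeltaGeneratedSpace A] [DeltaGeneratedSpace B] [DeltaGeneratedSpace X]
    (f : A ⟶ B) (hf : Topology.IsClosedEmbedding f) (h : A ⟶ X)
    (hB : DeltaHausdorff B) (hX : DeltaHausdorff X) :
    DeltaHausdorff ((pushout f h : TopCat.{0}) : Type) :=
  deltaHausdorff_pushout_general f hf h hB hX
end

section
/- Let ι be a nonempty directed preorder and let X : ι → Top be a functor (a directed system of topological spaces) such that every transition map X_i → X_j (for i ≤ j) is injective and such that every X_i is Δ-generated and Δ-Hausdorff. Then the colimit of X in the category of topological spaces (equipped with the final topology) is Δ-Hausdorff. -/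
open CategoryTheory CategoryTheory.Limits

/-!
Closedness in the colimit is tested on each `X i` and, as `X i` is Δ-generated, along maps
`p : ℝⁿ → X i`. Because the transition maps are injective, the image in the colimit of a set
`S ⊆ X k` is closed as soon as its images in all later `X m` are closed. This applies to the image
of a closed ball of `ℝⁿ`: in a sequential Δ-Hausdorff space such an image is closed, since a
convergent sequence in the ball has a subsequence lying, together with its limit, on a path inside
the ball (a polyline), whose image is closed.

Now let `f` be a path in the colimit. If `(x, s)` lies in the closure of
`E = {(x, s) | ι_i (p x) = f s} ⊆ ℝⁿ × [0,1]`, then `f s` lies in the (closed) image of every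
closed ball around `x`, so `x` is in the closure of the fibre of `ι_i ∘ p` over `f s`. That fibre
is closed since `ι_i` is injective and `X i` is T1; hence `E` is closed, and projecting along the
compact factor `[0,1]` shows that `p⁻¹ (ι_i⁻¹ (range f))` is closed.
-/

open Set Filter Topology unitInterval

section Polyline

variable {E : Type*} [NormedAddCommGroup E] [NormedSpace ℝ E]

noncomputable def polyline (z : ℤ → E) (t : ℝ) : E :=
  AffineMap.lineMap (z ⌊t⌋) (z (⌊t⌋ + 1)) (Int.fract t)

lemma polyline_intCast (z : ℤ → E) (n : ℤ) : polyline z n = z n := by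
  simp [polyline]

lemma polyline_mem_segment (z : ℤ → E) (t : ℝ) :
    polyline z t ∈ segment ℝ (z ⌊t⌋) (z (⌊t⌋ + 1)) :=
  ⟨1 - Int.fract t, Int.fract t, by linarith [Int.fract_lt_one t], Int.fract_nonneg t,
    by ring, by simp [polyline, AffineMap.lineMap_apply_module]⟩

lemma polyline_eqOn_Icc (z : ℤ → E) (n : ℤ) :
    EqOn (polyline z) (fun t ↦ AffineMap.lineMap (z n) (z (n + 1)) (t - n))
      (Icc (n : ℝ) (n + 1)) := by
  intro t ⟨hnt, htn⟩
  rcases htn.lt_or_eq with htn | rfl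
  · have hfl : ⌊t⌋ = n := Int.floor_eq_iff.2 ⟨hnt, htn⟩
    simp [polyline, hfl, Int.fract]
  · simpa using polyline_intCast z (n + 1)

lemma continuous_polyline (z : ℤ → E) : Continuous (polyline z) := by
  refine (locallyFinite_Icc_of_tendsto (f := fun n : ℤ ↦ (n : ℝ)) (g := fun n : ℤ ↦ (n : ℝ) + 1)
    tendsto_intCast_atTop_atTop ?_).continuous ?_ (fun _ ↦ isClosed_Icc) fun n ↦
    (continuousOn_congr (polyline_eqOn_Icc z n)).2 (by fun_prop)
  · exact tendsto_atBot_add_const_right _ _ (tendsto_intCast_atBot_iff.2 tendsto_id)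
  · exact eq_univ_of_forall fun t ↦ mem_iUnion.2
      ⟨⌊t⌋, Int.floor_le t, (Int.lt_floor_add_one t).le⟩

lemma Convex.eventually_polyline_mem {K : Set E} (hK : Convex ℝ K) {z : ℤ → E}
    (hz : ∀ᶠ n in atTop, z n ∈ K) : ∀ᶠ t in atTop, polyline z t ∈ K := by
  have hz' : ∀ᶠ n in atTop, z n ∈ K ∧ z (n + 1) ∈ K :=
    hz.and ((tendsto_atTop_add_const_right _ 1 tendsto_id).eventually hz)
  filter_upwards [tendsto_floor_atTop.eventually hz'] with t ht
  exact hK.segment_subset ht.1 ht.2 (polyline_mem_segment z t)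

lemma tendsto_polyline {z : ℤ → E} {l : E} (hz : Tendsto z atTop (𝓝 l)) :
    Tendsto (polyline z) atTop (𝓝 l) :=
  Metric.nhds_basis_closedBall.tendsto_right_iff.2 fun ε hε ↦
    (convex_closedBall l ε).eventually_polyline_mem
      (Metric.nhds_basis_closedBall.tendsto_right_iff.1 hz ε hε)

lemma tendsto_inv_one_sub_nhdsLT_one : Tendsto (fun s : ℝ ↦ (1 - s)⁻¹) (𝓝[<] 1) atTop := by
  refine tendsto_inv_nhdsGT_zero.comp (tendsto_nhdsWithin_iff.2 ⟨?_, ?_⟩)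
  · exact ((continuous_const.sub continuous_id).tendsto' (1 : ℝ) 0 (sub_self 1)).mono_left
      nhdsWithin_le_nhds
  · filter_upwards [self_mem_nhdsWithin] with s hs using sub_pos.2 (mem_Iio.1 hs)

/-- The path runs along the polyline through `y 0, y 1, …`, passing `y n` at time `1 - 1/n`,
and ends at `l`. -/
lemma Convex.exists_path_eventually_mem_range {K : Set E} (hK : Convex ℝ K) {y : ℕ → E} {l : E}
    (hy : Tendsto y atTop (𝓝 l)) (hyK : ∀ n, y n ∈ K) (hl : l ∈ K) :
    ∃ q : C(I, E), range q ⊆ K ∧ ∀ᶠ n in atTop, y n ∈ range q := by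
  set z : ℤ → E := fun n ↦ y n.toNat
  set Q : ℝ → E := fun s ↦ if s < 1 then polyline z (1 - s)⁻¹ else l
  have hz : Tendsto z atTop (𝓝 l) :=
    hy.comp (tendsto_atTop_atTop.2 fun b ↦ ⟨b, fun n hn ↦ by omega⟩)
  have hQ : Continuous Q := by
    refine continuous_iff_continuousAt.2 fun s ↦ ?_
    rcases lt_trichotomy s 1 with hs | rfl | hs
    · refine ContinuousAt.congr ?_
        (eventuallyEq_of_mem (eventually_lt_nhds hs) fun t ht ↦ (if_pos ht).symm)
      exact (continuous_polyline z).continuousAt.comp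
        ((continuousAt_const.sub continuousAt_id).inv₀ (sub_ne_zero.2 hs.ne'))
    · rw [ContinuousAt, show Q 1 = l from if_neg (lt_irrefl 1), ← nhdsLT_sup_nhdsGE,
        tendsto_sup]
      refine ⟨((tendsto_polyline hz).comp tendsto_inv_one_sub_nhdsLT_one).congr' ?_,
        tendsto_const_nhds.congr' ?_⟩
      · filter_upwards [self_mem_nhdsWithin] with t ht using (if_pos ht).symm
      · filter_upwards [self_mem_nhdsWithin] with t ht using
          (if_neg (not_lt.2 (mem_Ici.1 ht))).symm
    · exact continuousAt_const.congr
        (eventuallyEq_of_mem (eventually_gt_nhds hs) fun t ht ↦ (if_neg (not_lt.2 ht.le)).symm)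
  refine ⟨⟨fun s ↦ Q s, hQ.comp continuous_subtype_val⟩, ?_, ?_⟩
  · rintro _ ⟨s, rfl⟩
    dsimp only [ContinuousMap.coe_mk, Q]
    split_ifs
    · exact hK.segment_subset (hyK _) (hyK _) (polyline_mem_segment z _)
    · exact hl
  · filter_upwards [eventually_ge_atTop 1] with n hn
    have hn' : (0 : ℝ) < (n : ℝ)⁻¹ := by positivity
    refine ⟨⟨1 - (n : ℝ)⁻¹, by simp [inv_le_one_of_one_le₀ (by exact_mod_cast hn : (1 : ℝ) ≤ n)],
      by linarith⟩, ?_⟩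
    change Q (1 - (n : ℝ)⁻¹) = y n
    simpa [Q, hn'] using (polyline_intCast z n).trans (by simp [z])

end Polyline

namespace DeltaHausdorff

variable {X E : Type*} [TopologicalSpace X] [NormedAddCommGroup E] [NormedSpace ℝ E]

lemma t1Space_s15 (hX : DeltaHausdorff X) : T1Space X :=
  ⟨fun x ↦ by rw [← range_const (ι := I)]; exact hX (.const I x)⟩

lemma isClosed_image_of_isCompact_of_convex [SequentialSpace X] (hX : DeltaHausdorff X)
    {K : Set E} (hK : IsCompact K) (hKc : Convex ℝ K) {g : E → X} (hg : Continuous g) :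
    IsClosed (g '' K) := by
  refine IsSeqClosed.isClosed fun x z hx hxz ↦ ?_
  choose b hbK hb using hx
  obtain ⟨l, hlK, φ, hφ, hbl⟩ := hK.tendsto_subseq hbK
  obtain ⟨q, hqK, hbq⟩ := hKc.exists_path_eventually_mem_range hbl (fun n ↦ hbK _) hlK
  have hz : z ∈ range (g ∘ q) := by
    refine (hX ((⟨g, hg⟩ : C(E, X)).comp q)).mem_of_tendsto (hxz.comp hφ.tendsto_atTop) ?_
    filter_upwards [hbq] with n ⟨t, ht⟩
    exact ⟨t, by simp [ht, hb]⟩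
  obtain ⟨t, rfl⟩ := hz
  exact ⟨q t, hqK ⟨t, rfl⟩, rfl⟩

end DeltaHausdorff

lemma isClosed_setOf_eq_of_isClosed_image_closedBall {A B Y : Type*} [PseudoMetricSpace A]
    [TopologicalSpace B] [TopologicalSpace Y] {g : A → Y} {f : B → Y}
    (hg : ∀ y, IsClosed (g ⁻¹' {y})) (hf : Continuous f)
    (himg : ∀ a, ∀ ε > 0, IsClosed (g '' Metric.closedBall a ε)) :
    IsClosed {z : A × B | g z.1 = f z.2} := by
  refine closure_subset_iff_isClosed.1 fun ⟨a, b⟩ hab ↦ ?_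
  suffices a ∈ closure (g ⁻¹' {f b}) by simpa [(hg _).closure_eq] using this
  refine Metric.mem_closure_iff.2 fun ε hε ↦ ?_
  have hU : IsOpen (Metric.ball a (ε / 2) ×ˢ univ : Set (A × B)) :=
    Metric.isOpen_ball.prod isOpen_univ
  have hfb : f b ∈ g '' Metric.closedBall a (ε / 2) := by
    rw [← (himg a _ (half_pos hε)).closure_eq]
    refine map_mem_closure (f := fun z : A × B ↦ f z.2) (hf.comp continuous_snd)
      (hU.inter_closure ⟨⟨Metric.mem_ball_self (half_pos hε), trivial⟩, hab⟩) ?_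
    rintro ⟨a', b'⟩ ⟨⟨ha', -⟩, hab'⟩
    exact ⟨a', Metric.ball_subset_closedBall ha', hab'⟩
  obtain ⟨a', ha', hga'⟩ := hfb
  exact ⟨a', hga', (Metric.mem_closedBall'.1 ha').trans_lt (half_lt_self hε)⟩

namespace CategoryTheory.Limits

universe u

variable {ι : Type u} [Preorder ι] [IsDirected ι (· ≤ ·)] {F : ι ⥤ TopCat.{u}}
  (hinj : ∀ (i j : ι) (hij : i ≤ j), Function.Injective (F.map (homOfLE hij)))
  {c : Cocone F} (hc : IsColimit c)
include hinj hc

lemma injective_ι_app_of_injective (i : ι) : Function.Injective (c.ι.app i) := by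
  intro x y hxy
  obtain ⟨j, f, hf⟩ := (hc.eq_iff' x y).1 hxy
  exact hinj i j (leOfHom f) hf

lemma ι_app_eq_ι_app_iff_of_injective {i j m : ι} (him : i ≤ m) (hjm : j ≤ m) (x : F.obj i)
    (z : F.obj j) :
    c.ι.app i x = c.ι.app j z ↔ F.map (homOfLE him) x = F.map (homOfLE hjm) z := by
  rw [← c.w (homOfLE him), ← c.w (homOfLE hjm)]
  exact (injective_ι_app_of_injective hinj hc m).eq_iff

lemma preimage_ι_app_image_ι_app_of_injective {k l m : ι} (hkm : k ≤ m) (hlm : l ≤ m)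
    (S : Set (F.obj k)) :
    c.ι.app l ⁻¹' (c.ι.app k '' S) = F.map (homOfLE hlm) ⁻¹' (F.map (homOfLE hkm) '' S) := by
  ext x
  simp [ι_app_eq_ι_app_iff_of_injective hinj hc hkm hlm]

lemma isClosed_image_ι_app_of_injective {k : ι} {S : Set (F.obj k)}
    (hS : ∀ m (hkm : k ≤ m), IsClosed (F.map (homOfLE hkm) '' S)) :
    IsClosed (c.ι.app k '' S) := by
  rw [TopCat.isClosed_iff_of_isColimit _ hc]
  intro l
  obtain ⟨m, hkm, hlm⟩ := directed_of (· ≤ ·) k l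
  rw [preimage_ι_app_image_ι_app_of_injective hinj hc hkm hlm]
  exact (hS m hkm).preimage (F.map _).hom.continuous

end CategoryTheory.Limits

theorem deltaHausdorff_directed_colimit_general
    {ι : Type} [Preorder ι] [IsDirected ι (· ≤ ·)]
    (F : ι ⥤ TopCat.{0})
    (hinj : ∀ (i j : ι) (hij : i ≤ j), Function.Injective (F.map (homOfLE hij)))
    (hdg : ∀ i : ι, DeltaGeneratedSpace (F.obj i))
    (hH : ∀ i : ι, DeltaHausdorff (F.obj i))
    (c : Cocone F) (hc : IsColimit c) :
    DeltaHausdorff c.pt := by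
  intro f
  refine (TopCat.isClosed_iff_of_isColimit _ hc _).2 fun i ↦ ?_
  have := hdg i
  have := (hH i).t1Space_s15
  refine (IsGeneratedBy.isClosed_iff (fun n ↦ Fin n → ℝ)).2 fun n p ↦ ?_
  have hfib (y : c.pt) : IsClosed (c.ι.app i ∘ p ⁻¹' {y}) :=
    (subsingleton_singleton.preimage (injective_ι_app_of_injective hinj hc i)).isClosed.preimage
      p.continuous
  have himg (a : Fin n → ℝ) (ε : ℝ) : IsClosed (c.ι.app i ∘ p '' Metric.closedBall a ε) := by
    rw [image_comp]
    refine isClosed_image_ι_app_of_injective hinj hc fun m him ↦ ?_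
    rw [← image_comp]
    exact (hH m).isClosed_image_of_isCompact_of_convex (isCompact_closedBall a ε)
      (convex_closedBall a ε) ((F.map _).hom.continuous.comp p.continuous)
  have hE := isClosed_setOf_eq_of_isClosed_image_closedBall hfib f.continuous
    fun a ε _ ↦ himg a ε
  have hproj : p ⁻¹' (c.ι.app i ⁻¹' range f) =
      Prod.fst '' {z : (Fin n → ℝ) × I | c.ι.app i (p z.1) = f z.2} := by
    ext; simp [eq_comm]
  rw [hproj]
  exact isClosedMap_fst_of_compactSpace _ hE

/-- The colimit (in the category of topological spaces) of a directed system of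
Δ-generated Δ-Hausdorff spaces with injective transition maps is Δ-Hausdorff. -/
theorem deltaHausdorff_directed_colimit
    {ι : Type} [Preorder ι] [Nonempty ι] [IsDirected ι (· ≤ ·)]
    (F : ι ⥤ TopCat.{0})
    (hinj : ∀ (i j : ι) (hij : i ≤ j), Function.Injective (F.map (homOfLE hij)))
    (hdg : ∀ i : ι, DeltaGeneratedSpace (F.obj i))
    (hH : ∀ i : ι, DeltaHausdorff (F.obj i))
    (c : Cocone F) (hc : IsColimit c) :
    DeltaHausdorff c.pt :=
  deltaHausdorff_directed_colimit_general F hinj hdg hH c hc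
end
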